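/- Invariance of the motivic generating series under unlinking (coefficient identity): Let C be a symmetric m×m integer matrix, let i ≠ j be nodes in {1,…,m}, and let C′ be the (m+1)×(m+1) unlinked matrix U(i,j)C. Then for every function d : {1,…,m} → ℕ, the following identity holds in the field ℚ(q): (−q)^{Σ_{a,b=1}^{m} C(a,b)·d(a)·d(b)} · ∏_{a=1}^{m} (q²;q²)_{d(a)}⁻¹ = Σ_{t=0}^{min(d(i),d(j))} q^{−t} · (−q)^{Σ_{a,b=1}^{m+1} C′(a,b)·e_t(a)·e_t(b)} · ∏_{a=1}^{m+1} (q²;q²)_{e_t(a)}⁻¹, where e_t(i) = d(i) − t, e_t(j) = d(j) − t, e_t(m+1) = t, and e_t(a) = d(a) for all other a ≤ m. (This identity says that the motivic generating series P of the unlinked quiver, after the substitution x_{m+1} = q⁻¹·x_i·x_j, equals the motivic generating series of the original quiver.) -/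
import Mathlib


namespace QuiverUnlink

/-- Unlinking of the distinct nodes `i` and `j`: the matrix part.
Nodes are indexed `0, …, m-1`; the newly created node has index `m`. -/
def unlinkC {m : ℕ} (C : Fin m → Fin m → ℤ) (i j : Fin m) :
    Fin (m + 1) → Fin (m + 1) → ℤ := fun a b =>
  if ha : (a : ℕ) < m then
    if hb : (b : ℕ) < m then
      if ((⟨a, ha⟩ : Fin m) = i ∧ (⟨b, hb⟩ : Fin m) = j) ∨
         ((⟨a, ha⟩ : Fin m) = j ∧ (⟨b, hb⟩ : Fin m) = i) then
        C i j - 1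
      else C ⟨a, ha⟩ ⟨b, hb⟩
    else
      if (⟨a, ha⟩ : Fin m) = i then C i i + C i j - 1
      else if (⟨a, ha⟩ : Fin m) = j then C j j + C i j - 1
      else C ⟨a, ha⟩ i + C ⟨a, ha⟩ j
  else
    if hb : (b : ℕ) < m then
      if (⟨b, hb⟩ : Fin m) = i then C i i + C i j - 1
      else if (⟨b, hb⟩ : Fin m) = j then C j j + C i j - 1
      else C ⟨b, hb⟩ i + C ⟨b, hb⟩ j
    else C i i + C j j + 2 * C i j - 1

/-- Unlinking of the distinct nodes `i` and `j`: the generating-parameters part. -/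
def unlinkX {G : Type*} [CommGroup G] {m : ℕ} (q : G) (x : Fin m → G) (i j : Fin m) :
    Fin (m + 1) → G := fun a =>
  if ha : (a : ℕ) < m then x ⟨a, ha⟩ else q⁻¹ * x i * x j

/-- The indeterminate `q` of the field `ℚ(q)`. -/
noncomputable def qvar : RatFunc ℚ := RatFunc.X

/-- The `q`-Pochhammer symbol `(q²;q²)_n = ∏_{r=0}^{n-1} (1 - q^{2r+2})` in `ℚ(q)`. -/
noncomputable def qPoch (n : ℕ) : RatFunc ℚ :=
  ∏ r ∈ Finset.range n, (1 - qvar ^ (2 * r + 2))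

/-- The dimension vector `e_t` for the unlinked quiver: `e_t(i) = d(i) - t`,
`e_t(j) = d(j) - t`, `e_t(m+1) = t`, and `e_t(a) = d(a)` otherwise. -/
def etVec {m : ℕ} (i j : Fin m) (d : Fin m → ℕ) (t : ℕ) : Fin (m + 1) → ℕ := fun a =>
  if ha : (a : ℕ) < m then
    if (⟨a, ha⟩ : Fin m) = i then d i - t
    else if (⟨a, ha⟩ : Fin m) = j then d j - t
    else d ⟨a, ha⟩
  else t

lemma qvar_ne_zero : qvar ≠ 0 := RatFunc.X_ne_zero

lemma one_sub_qvar_pow_ne_zero {k : ℕ} (hk : 0 < k) : (1 : RatFunc ℚ) - qvar ^ k ≠ 0 := by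
  intro h
  have h1 : (qvar : RatFunc ℚ) ^ k = 1 := by linear_combination -h
  have hpoly : (Polynomial.X : Polynomial ℚ) ^ k = 1 := by
    rw [qvar, RatFunc.X, ← map_pow, ← map_one (algebraMap (Polynomial ℚ) (RatFunc ℚ))] at h1
    exact RatFunc.algebraMap_injective ℚ h1
  have h2 := congrArg (Polynomial.eval 0) hpoly
  simp [Polynomial.eval_pow, zero_pow hk.ne'] at h2

lemma qPoch_ne_zero (n : ℕ) : qPoch n ≠ 0 :=
  Finset.prod_ne_zero_iff.mpr fun r _ => one_sub_qvar_pow_ne_zero (by omega)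

noncomputable def gb : ℕ → ℕ → RatFunc ℚ
  | _, 0 => 1
  | 0, _+1 => 0
  | n+1, t+1 => gb n t + qvar ^ (2 * (t + 1)) * gb n (t + 1)

@[simp] lemma gb_zero_right (n : ℕ) : gb n 0 = 1 := by cases n <;> rfl

lemma gb_eq_zero : ∀ {n t : ℕ}, n < t → gb n t = 0
  | 0, _+1, _ => rfl
  | n+1, t+1, h => by
      rw [gb, gb_eq_zero (by omega), gb_eq_zero (by omega)]; ring

lemma qPoch_succ (n : ℕ) : qPoch (n + 1) = qPoch n * (1 - qvar ^ (2 * n + 2)) :=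
  Finset.prod_range_succ _ n

lemma gb_mul : ∀ n t : ℕ, t ≤ n → gb n t * qPoch t * qPoch (n - t) = qPoch n := by
  intro n
  induction n with
  | zero => intro t ht; interval_cases t; simp [qPoch]
  | succ n ih =>
    intro t ht
    match t with
    | 0 => simp [qPoch]
    | t + 1 =>
      rcases Nat.lt_or_ge (t + 1) (n + 1) with h | h
      · have ht1 : t ≤ n := by omega
        have ht2 : t + 1 ≤ n := by omega
        rw [gb]
        have e1 : n + 1 - (t + 1) = (n - (t + 1)) + 1 := by omega
        have e2 : n - t = (n - (t + 1)) + 1 := by omega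
        have e3 : 2 * (n - (t + 1)) + 2 = 2 * (n - t) := by omega
        rw [e1, qPoch_succ (n - (t+1)), qPoch_succ t, e3]
        have i1 := ih t ht1
        have i2 := ih (t+1) ht2
        rw [e2, qPoch_succ (n - (t+1)), e3] at i1
        have e4 : n - (t + 1) = n - t - 1 := by omega
        calc (gb n t + qvar ^ (2 * (t + 1)) * gb n (t + 1)) * (qPoch t * (1 - qvar ^ (2 * t + 2))) *
              (qPoch (n - (t+1)) * (1 - qvar ^ (2 * (n - t))))
            = (gb n t * qPoch t * (qPoch (n - (t+1)) * (1 - qvar ^ (2 * (n-t))))) * (1 - qvar ^ (2*t+2))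
              + qvar ^ (2 * (t+1)) * (gb n (t+1) * (qPoch t * (1 - qvar ^ (2*t+2))) * qPoch (n - (t+1)))
                * (1 - qvar ^ (2 * (n-t))) := by ring
          _ = qPoch n * (1 - qvar ^ (2*t+2)) + qvar ^ (2*(t+1)) * qPoch n * (1 - qvar ^ (2*(n-t))) := by
              rw [i1]
              have : qPoch t * (1 - qvar ^ (2*t+2)) = qPoch (t+1) := (qPoch_succ t).symm
              rw [this, i2]
          _ = qPoch (n+1) := by
              rw [qPoch_succ n]
              have : 2 * (t + 1) + 2 * (n - t) = 2 * n + 2 := by omega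
              have hq : qvar ^ (2 * (t+1)) * qvar ^ (2 * (n - t)) = qvar ^ (2 * n + 2) := by
                rw [← pow_add, this]
              have h22 : 2 * t + 2 = 2 * (t + 1) := by omega
              rw [h22]
              linear_combination (-(qPoch n)) * hq
      · have htn : t = n := by omega
        subst htn
        rw [gb, gb_eq_zero (Nat.lt_succ_self t)]
        simp only [mul_zero, add_zero, Nat.sub_self]
        have h0 : qPoch 0 = 1 := by simp [qPoch]
        rw [h0, mul_one]
        have i1 := ih t le_rfl
        rw [Nat.sub_self, h0, mul_one] at i1
        have hone : gb t t = 1 := by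
          have := qPoch_ne_zero t
          field_simp at i1
          exact i1
        rw [hone, one_mul]

lemma newton (n : ℕ) (x : RatFunc ℚ) :
    x ^ n = ∑ t ∈ Finset.range (n + 1), gb n t * ∏ s ∈ Finset.range t, (x - qvar ^ (2 * s)) := by
  induction n with
  | zero => simp
  | succ n ih =>
    have hx : ∀ t : ℕ, x * ∏ s ∈ Finset.range t, (x - qvar ^ (2 * s)) =
        (∏ s ∈ Finset.range (t + 1), (x - qvar ^ (2 * s))) +
          qvar ^ (2 * t) * ∏ s ∈ Finset.range t, (x - qvar ^ (2 * s)) := by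
      intro t
      rw [Finset.prod_range_succ]; ring
    have expand : x ^ (n + 1) =
        ∑ t ∈ Finset.range (n + 1), gb n t * ∏ s ∈ Finset.range (t + 1), (x - qvar ^ (2 * s)) +
        ∑ t ∈ Finset.range (n + 1), qvar ^ (2 * t) * gb n t * ∏ s ∈ Finset.range t, (x - qvar ^ (2 * s)) := by
      rw [pow_succ, mul_comm, ih, Finset.mul_sum, ← Finset.sum_add_distrib]
      refine Finset.sum_congr rfl fun t _ => ?_
      have := hx t
      linear_combination gb n t * this
    rw [expand]
    rw [Finset.sum_range_succ' (fun t => gb (n+1) t * ∏ s ∈ Finset.range t, (x - qvar ^ (2*s))) (n+1)]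
    simp only [gb, gb_zero_right, Finset.range_zero, Finset.prod_empty, mul_one]
    have h2 : ∑ t ∈ Finset.range (n + 2), qvar ^ (2 * t) * gb n t * ∏ s ∈ Finset.range t, (x - qvar ^ (2 * s))
        = ∑ t ∈ Finset.range (n + 1), qvar ^ (2 * t) * gb n t * ∏ s ∈ Finset.range t, (x - qvar ^ (2 * s)) := by
      rw [Finset.sum_range_succ, gb_eq_zero (Nat.lt_succ_self n)]; ring
    rw [← h2,
      Finset.sum_range_succ' (fun t => qvar ^ (2*t) * gb n t * ∏ s ∈ Finset.range t, (x - qvar ^ (2*s))) (n+1)]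
    simp only [gb_zero_right, Finset.range_zero, Finset.prod_empty, mul_one, pow_zero,
      Nat.mul_zero, add_mul, Finset.sum_add_distrib]
    ring


lemma poch_ratio : ∀ (t k : ℕ), t ≤ k →
    (∏ s ∈ Finset.range t, (1 - qvar ^ (2 * (k - s)))) * qPoch (k - t) = qPoch k := by
  intro t
  induction t with
  | zero => intro k _; simp
  | succ t ih =>
    intro k hk
    rw [Finset.prod_range_succ]
    have e1 : k - t = (k - (t + 1)) + 1 := by omega
    have e2 : 2 * (k - (t + 1)) + 2 = 2 * (k - t) := by omega
    have := ih k (by omega)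
    rw [e1, qPoch_succ, e2] at this
    linear_combination this

lemma prod_neg_pow (t : ℕ) :
    ∏ s ∈ Finset.range t, (-(qvar ^ (2 * s))) = (-1) ^ t * qvar ^ (t * (t - 1)) := by
  induction t with
  | zero => simp
  | succ t ih =>
    rw [Finset.prod_range_succ, ih]
    have : (t + 1) * (t + 1 - 1) = t * (t - 1) + 2 * t := by cases t <;> simp [Nat.succ_sub_one] <;> ring
    rw [this, pow_add, pow_succ]
    ring

lemma prod_sub_pow (t k : ℕ) (htk : t ≤ k) :
    ∏ s ∈ Finset.range t, (qvar ^ (2 * k) - qvar ^ (2 * s)) =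
      (-1) ^ t * qvar ^ (t * (t - 1)) * ∏ s ∈ Finset.range t, (1 - qvar ^ (2 * (k - s))) := by
  rw [← prod_neg_pow, ← Finset.prod_mul_distrib]
  refine Finset.prod_congr rfl fun s hs => ?_
  have hs' : s < t := Finset.mem_range.mp hs
  have : 2 * s + 2 * (k - s) = 2 * k := by omega
  have hq : qvar ^ (2 * s) * qvar ^ (2 * (k - s)) = qvar ^ (2 * k) := by rw [← pow_add, this]
  linear_combination -hq

/-- The key `q`-identity. -/
lemma key (n k : ℕ) :
    qvar ^ (2 * n * k) * (qPoch n)⁻¹ * (qPoch k)⁻¹ =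
      ∑ t ∈ Finset.range (min n k + 1),
        (-1) ^ t * qvar ^ (t * (t - 1)) *
          ((qPoch t)⁻¹ * (qPoch (n - t))⁻¹ * (qPoch (k - t))⁻¹) := by
  have hnewton := newton n (qvar ^ (2 * k))
  have hx : (qvar ^ (2 * k)) ^ n = qvar ^ (2 * n * k) := by
    rw [← pow_mul]; ring_nf
  simp only [← pow_mul] at hnewton
  have hpow : ∀ s : ℕ, qvar ^ (2 * k) - qvar ^ (2 * s) = qvar ^ (2*k) - qvar ^ (2*s) := fun _ => rfl
  -- rewrite the products
  have hterm : ∀ t ∈ Finset.range (n + 1),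
      gb n t * ∏ s ∈ Finset.range t, (qvar ^ (2 * k) - qvar ^ (2 * s)) =
        if t ≤ min n k then
          qPoch n * qPoch k * ((-1) ^ t * qvar ^ (t * (t - 1)) *
            ((qPoch t)⁻¹ * (qPoch (n - t))⁻¹ * (qPoch (k - t))⁻¹))
        else 0 := by
    intro t ht
    have htn : t ≤ n := by simpa [Nat.lt_succ_iff] using ht
    by_cases h : t ≤ min n k
    · have htk : t ≤ k := le_trans h (min_le_right _ _)
      rw [if_pos h, prod_sub_pow t k htk]
      have hz1 := qPoch_ne_zero t
      have hz2 := qPoch_ne_zero (n - t)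
      have hz3 := qPoch_ne_zero (k - t)
      have h1 : gb n t = qPoch n * (qPoch t)⁻¹ * (qPoch (n - t))⁻¹ := by
        have h := gb_mul n t htn
        field_simp
        linear_combination h
      have h2 : ∏ s ∈ Finset.range t, (1 - qvar ^ (2 * (k - s))) =
          qPoch k * (qPoch (k - t))⁻¹ := by
        have h := poch_ratio t k htk
        field_simp
        linear_combination h
      rw [h1, h2]
      ring
    · -- then k < t (since t ≤ n), so the product has a zero factor
      have hkt : k < t := by omega
      rw [if_neg h]
      have : ∏ s ∈ Finset.range t, (qvar ^ (2 * k) - qvar ^ (2 * s)) = 0 :=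
        Finset.prod_eq_zero (Finset.mem_range.mpr hkt) (by ring)
      rw [this, mul_zero]
  rw [Finset.sum_congr rfl hterm] at hnewton
  have hsub : Finset.range (min n k + 1) ⊆ Finset.range (n + 1) := by
    intro x hx
    simp only [Finset.mem_range] at hx ⊢
    omega
  have hshrink : (∑ t ∈ Finset.range (n + 1),
      if t ≤ min n k then
        qPoch n * qPoch k * ((-1) ^ t * qvar ^ (t * (t - 1)) *
          ((qPoch t)⁻¹ * (qPoch (n - t))⁻¹ * (qPoch (k - t))⁻¹))
      else 0) = ∑ t ∈ Finset.range (min n k + 1),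
        qPoch n * qPoch k * ((-1) ^ t * qvar ^ (t * (t - 1)) *
          ((qPoch t)⁻¹ * (qPoch (n - t))⁻¹ * (qPoch (k - t))⁻¹)) := by
    rw [← Finset.sum_subset hsub]
    · refine Finset.sum_congr rfl fun x hx => ?_
      rw [if_pos (by simpa [Nat.lt_succ_iff] using hx)]
    · intro x _ hx
      rw [if_neg (by simp only [Finset.mem_range] at hx; omega)]
  rw [hshrink, ← Finset.mul_sum] at hnewton
  have hk2 : 2 * k * n = 2 * n * k := by ring
  rw [hk2] at hnewton
  have hzn := qPoch_ne_zero n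
  have hzk := qPoch_ne_zero k
  rw [mul_inv_eq_iff_eq_mul₀ hzk, mul_inv_eq_iff_eq_mul₀ hzn, hnewton]
  ring


section
variable {m : ℕ} (C : Fin m → Fin m → ℤ) (i j : Fin m) (d : Fin m → ℕ) (t : ℕ)

lemma etVec_castSucc (a : Fin m) :
    etVec i j d t a.castSucc = if a = i then d i - t else if a = j then d j - t else d a := by
  simp [etVec, a.isLt]

lemma etVec_last : etVec i j d t (Fin.last m) = t := by
  simp [etVec]

lemma unlinkC_cc (hC : ∀ a b, C a b = C b a) (hij : i ≠ j) (a b : Fin m) :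
    unlinkC C i j a.castSucc b.castSucc =
      C a b - (if a = i then 1 else 0) * (if b = j then 1 else 0)
            - (if a = j then 1 else 0) * (if b = i then 1 else 0) := by
  simp only [unlinkC, a.isLt, b.isLt, dif_pos, Fin.coe_castSucc, Fin.eta]
  split_ifs <;> simp_all <;> first | ring | (rw [hC i j]) | (rw [hC j i]) | omega

lemma unlinkC_cl (hC : ∀ a b, C a b = C b a) (hij : i ≠ j) (a : Fin m) :
    unlinkC C i j a.castSucc (Fin.last m) =
      C a i + C a j - (if a = i then 1 else 0) - (if a = j then 1 else 0) := by
  simp only [unlinkC, a.isLt, dif_pos, Fin.coe_castSucc, Fin.eta, Fin.val_last,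
    lt_self_iff_false, dite_false]
  split_ifs <;> subst_vars <;> simp_all <;> first | ring | (rw [hC i j]) | (rw [hC j i]) | omega

lemma unlinkC_lc (hC : ∀ a b, C a b = C b a) (hij : i ≠ j) (b : Fin m) :
    unlinkC C i j (Fin.last m) b.castSucc =
      C b i + C b j - (if b = i then 1 else 0) - (if b = j then 1 else 0) := by
  simp only [unlinkC, b.isLt, dif_pos, Fin.coe_castSucc, Fin.eta, Fin.val_last,
    lt_self_iff_false, dite_false]
  split_ifs <;> subst_vars <;> simp_all <;> first | ring | (rw [hC i j]) | (rw [hC j i]) | omega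

lemma unlinkC_ll : unlinkC C i j (Fin.last m) (Fin.last m) =
    C i i + C j j + 2 * C i j - 1 := by
  simp [unlinkC]


lemma sum_delta (f : Fin m → ℤ) (c : Fin m) :
    (∑ b : Fin m, (if b = c then (1:ℤ) else 0) * f b) = f c := by
  simp [ite_mul]

lemma qf (hC : ∀ a b, C a b = C b a) (hij : i ≠ j) (hti : t ≤ d i) (htj : t ≤ d j) :
    (∑ a : Fin (m + 1), ∑ b : Fin (m + 1),
        unlinkC C i j a b * (etVec i j d t a : ℤ) * (etVec i j d t b : ℤ)) =
      (∑ a : Fin m, ∑ b : Fin m, C a b * (d a : ℤ) * (d b : ℤ))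
        + (t : ℤ) ^ 2 - 2 * (d i : ℤ) * (d j : ℤ) := by
  set D : Fin m → ℤ := fun a => (d a : ℤ) with hD
  set E : Fin m → ℤ := fun a =>
    D a - t * (if a = i then 1 else 0) - t * (if a = j then 1 else 0) with hE
  have hEi : E i = D i - t := by simp [hE, hij]
  have hEj : E j = D j - t := by simp [hE, hij, Ne.symm hij]
  have hcast : ∀ a : Fin m, ((etVec i j d t a.castSucc : ℕ) : ℤ) = E a := by
    intro a
    rw [etVec_castSucc]
    rcases eq_or_ne a i with rfl | hai
    · rw [if_pos rfl]
      rw [hEi]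
      push_cast [hti]
      ring
    · rcases eq_or_ne a j with rfl | haj
      · rw [if_neg hai, if_pos rfl, hEj]
        push_cast [htj]
        ring
      · rw [if_neg hai, if_neg haj]
        simp [hE, hai, haj, hD]
  simp only [Fin.sum_univ_castSucc]
  simp only [unlinkC_cc C i j hC hij, unlinkC_cl C i j hC hij, unlinkC_lc C i j hC hij,
    unlinkC_ll, etVec_last, hcast]
  -- inner sums
  have inner1 : ∀ a : Fin m,
      (∑ b : Fin m, (C a b - (if a = i then (1:ℤ) else 0) * (if b = j then 1 else 0)
          - (if a = j then 1 else 0) * (if b = i then 1 else 0)) * E a * E b)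
        = (∑ b : Fin m, C a b * E a * E b)
          - (if a = i then (1:ℤ) else 0) * (E a * E j)
          - (if a = j then (1:ℤ) else 0) * (E a * E i) := by
    intro a
    have hb : ∀ b : Fin m, (C a b - (if a = i then (1:ℤ) else 0) * (if b = j then 1 else 0)
          - (if a = j then 1 else 0) * (if b = i then 1 else 0)) * E a * E b
        = C a b * E a * E b
          - (if a = i then (1:ℤ) else 0) * (E a * ((if b = j then (1:ℤ) else 0) * E b))
          - (if a = j then (1:ℤ) else 0) * (E a * ((if b = i then (1:ℤ) else 0) * E b)) := by
      intro b; ring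
    rw [Finset.sum_congr rfl fun b _ => hb b, Finset.sum_sub_distrib, Finset.sum_sub_distrib,
      ← Finset.mul_sum, ← Finset.mul_sum, ← Finset.mul_sum, ← Finset.mul_sum,
      sum_delta E j, sum_delta E i]
  clear inner1
  simp only [sub_mul, add_mul, mul_sub, mul_add, mul_ite, ite_mul, mul_one, one_mul, mul_zero,
    zero_mul, Finset.sum_sub_distrib, Finset.sum_add_distrib, Finset.sum_ite_eq,
    Finset.sum_ite_eq', Finset.mem_univ, if_true]
  simp only [hE, hD]
  simp only [sub_mul, add_mul, mul_sub, mul_add, mul_ite, ite_mul, mul_one, one_mul, mul_zero,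
    zero_mul, Finset.sum_sub_distrib, Finset.sum_add_distrib, Finset.sum_ite_eq,
    Finset.sum_ite_eq', Finset.mem_univ, if_true, hij, Ne.symm hij, if_neg, if_false]
  have h1 : ∀ c : Fin m, (∑ x : Fin m, ∑ x1 : Fin m, if x = c then C x x1 * (t:ℤ) * (d x1 : ℤ) else 0)
      = ∑ x1 : Fin m, C c x1 * (t:ℤ) * (d x1 : ℤ) := by
    intro c
    have h0 : ∀ x : Fin m, (∑ x1 : Fin m, if x = c then C x x1 * (t:ℤ) * (d x1:ℤ) else 0)
        = if x = c then ∑ x1 : Fin m, C x x1 * (t:ℤ) * (d x1:ℤ) else 0 := by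
      intro x; split_ifs <;> simp
    rw [Finset.sum_congr rfl fun x _ => h0 x]
    simp
  have e3 : (∑ x : Fin m, C i x * (t:ℤ) * (d x : ℤ)) = ∑ x : Fin m, C x i * (t:ℤ) * (d x:ℤ) :=
    Finset.sum_congr rfl fun x _ => by rw [hC]
  have e4 : (∑ x : Fin m, C j x * (t:ℤ) * (d x : ℤ)) = ∑ x : Fin m, C x j * (t:ℤ) * (d x:ℤ) :=
    Finset.sum_congr rfl fun x _ => by rw [hC]
  have e1 : (∑ x : Fin m, C x i * (d x : ℤ) * (t:ℤ)) = ∑ x : Fin m, C x i * (t:ℤ) * (d x:ℤ) :=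
    Finset.sum_congr rfl fun x _ => by ring
  have e2 : (∑ x : Fin m, C x j * (d x : ℤ) * (t:ℤ)) = ∑ x : Fin m, C x j * (t:ℤ) * (d x:ℤ) :=
    Finset.sum_congr rfl fun x _ => by ring
  linear_combination (-1 : ℤ) * (h1 i) + (-1 : ℤ) * (h1 j) - e3 - e4 + (t:ℤ)^2 * hC i j



lemma prod_fin (f : Fin m → RatFunc ℚ) (hij : i ≠ j) :
    (∏ a : Fin m, f a) = f i * f j * ∏ a ∈ (Finset.univ.erase i).erase j, f a := by
  rw [← Finset.mul_prod_erase Finset.univ f (Finset.mem_univ i),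
    ← Finset.mul_prod_erase _ f (Finset.mem_erase.mpr ⟨Ne.symm hij, Finset.mem_univ j⟩), mul_assoc]

lemma prod_et (hij : i ≠ j) (f : ℕ → RatFunc ℚ) :
    (∏ a : Fin (m+1), f (etVec i j d t a)) =
      f (d i - t) * f (d j - t) * f t * ∏ a ∈ (Finset.univ.erase i).erase j, f (d a) := by
  rw [Fin.prod_univ_castSucc]
  simp only [etVec_castSucc, etVec_last]
  rw [prod_fin i j (fun a => f (if a = i then d i - t else if a = j then d j - t else d a)) hij]
  rw [if_pos rfl, if_neg (Ne.symm hij), if_pos rfl]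
  have : ∀ a ∈ (Finset.univ.erase i).erase j,
      f (if a = i then d i - t else if a = j then d j - t else d a) = f (d a) := by
    intro a ha
    rw [Finset.mem_erase, Finset.mem_erase] at ha
    rw [if_neg ha.2.1, if_neg ha.1]
  rw [Finset.prod_congr rfl this]
  ring


end

/-- **Invariance of the motivic generating series under unlinking** (coefficient identity).
For a symmetric `m×m` integer matrix `C`, distinct nodes `i ≠ j`, and every dimension vector
`d`, the coefficient of the motivic generating series of `C` at `d` equals the sum over
`t = 0, …, min (d i) (d j)` of `q^{-t}` times the coefficients of the generating series of
the unlinked matrix `U(i,j) C` at the dimension vectors `e_t`. This expresses that after the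
substitution `x_{m+1} = q⁻¹ x_i x_j`, the motivic generating series of the unlinked quiver
equals that of the original quiver. -/

theorem unlinking_generating_series_invariance {m : ℕ}
    (C : Fin m → Fin m → ℤ) (hC : ∀ a b, C a b = C b a) (i j : Fin m) (hij : i ≠ j)
    (d : Fin m → ℕ) :
    (-qvar) ^ (∑ a : Fin m, ∑ b : Fin m, C a b * (d a : ℤ) * (d b : ℤ)) *
        ∏ a : Fin m, (qPoch (d a))⁻¹ =
      ∑ t ∈ Finset.range (min (d i) (d j) + 1),
        qvar ^ (-(t : ℤ)) *
          (-qvar) ^ (∑ a : Fin (m + 1), ∑ b : Fin (m + 1),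
              unlinkC C i j a b * (etVec i j d t a : ℤ) * (etVec i j d t b : ℤ)) *
          ∏ a : Fin (m + 1), (qPoch (etVec i j d t a))⁻¹ := by
  have hnegq : (-qvar) ≠ 0 := neg_ne_zero.mpr qvar_ne_zero
  have hq2 : (qvar : RatFunc ℚ) ^ (2 * d i * d j) ≠ 0 := pow_ne_zero _ qvar_ne_zero
  have hterm : ∀ t ∈ Finset.range (min (d i) (d j) + 1),
      qvar ^ (-(t : ℤ)) * (-qvar) ^ (∑ a : Fin (m + 1), ∑ b : Fin (m + 1),
          unlinkC C i j a b * (etVec i j d t a : ℤ) * (etVec i j d t b : ℤ)) *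
        ∏ a : Fin (m + 1), (qPoch (etVec i j d t a))⁻¹
      = (-qvar) ^ (∑ a : Fin m, ∑ b : Fin m, C a b * (d a : ℤ) * (d b : ℤ)) *
          ((qvar ^ (2 * d i * d j))⁻¹ * ∏ a ∈ (Finset.univ.erase i).erase j, (qPoch (d a))⁻¹) *
          ((-1) ^ t * qvar ^ (t * (t - 1)) *
            ((qPoch t)⁻¹ * (qPoch (d i - t))⁻¹ * (qPoch (d j - t))⁻¹)) := by
    intro t ht
    have hti : t ≤ d i := by simp only [Finset.mem_range] at ht; omega
    have htj : t ≤ d j := by simp only [Finset.mem_range] at ht; omega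
    rw [qf C i j d t hC hij hti htj]
    rw [prod_et i j d t hij (fun n => (qPoch n)⁻¹)]
    have hsplit : (-qvar) ^ ((∑ a : Fin m, ∑ b : Fin m, C a b * (d a : ℤ) * (d b : ℤ))
          + (t : ℤ) ^ 2 - 2 * (d i : ℤ) * (d j : ℤ))
        = (-qvar) ^ (∑ a : Fin m, ∑ b : Fin m, C a b * (d a : ℤ) * (d b : ℤ)) *
            ((-1) ^ t * qvar ^ (t ^ 2)) * (qvar ^ (2 * d i * d j))⁻¹ := by
      have he : (∑ a : Fin m, ∑ b : Fin m, C a b * (d a : ℤ) * (d b : ℤ))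
            + (t : ℤ) ^ 2 - 2 * (d i : ℤ) * (d j : ℤ)
          = (∑ a : Fin m, ∑ b : Fin m, C a b * (d a : ℤ) * (d b : ℤ))
            + ((t ^ 2 : ℕ) : ℤ) + (-((2 * d i * d j : ℕ) : ℤ)) := by push_cast; ring
      rw [he, zpow_add₀ hnegq, zpow_add₀ hnegq, zpow_natCast, zpow_neg, zpow_natCast]
      have h1 : (-qvar) ^ (t ^ 2) = (-1) ^ t * qvar ^ (t ^ 2) := by
        rw [neg_pow]
        congr 1
        rcases Nat.even_or_odd t with h | h
        · rw [(Nat.even_pow.mpr ⟨h, two_ne_zero⟩ : Even (t ^ 2)).neg_one_pow, h.neg_one_pow]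
        · rw [h.pow.neg_one_pow, h.neg_one_pow]
      have h2 : (-qvar) ^ (2 * d i * d j) = qvar ^ (2 * d i * d j) :=
        Even.neg_pow ⟨d i * d j, by ring⟩ _
      rw [h1, h2]
    rw [hsplit]
    have hqt : qvar ^ (-(t : ℤ)) * qvar ^ (t ^ 2) = qvar ^ (t * (t - 1)) := by
      rw [← zpow_natCast qvar (t ^ 2), ← zpow_add₀ qvar_ne_zero,
        ← zpow_natCast qvar (t * (t - 1))]
      congr 1
      cases t with
      | zero => simp
      | succ s => push_cast [Nat.succ_sub_one]; ring
    linear_combination ((-1 : RatFunc ℚ)) ^ t *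
      (-qvar) ^ (∑ a : Fin m, ∑ b : Fin m, C a b * (d a : ℤ) * (d b : ℤ)) *
      (qvar ^ (2 * d i * d j))⁻¹ *
      ((qPoch (d i - t))⁻¹ * (qPoch (d j - t))⁻¹ * (qPoch t)⁻¹ *
        ∏ a ∈ (Finset.univ.erase i).erase j, (qPoch (d a))⁻¹) * hqt
  rw [Finset.sum_congr rfl hterm, ← Finset.mul_sum, ← key (d i) (d j)]
  rw [prod_fin i j (fun a => (qPoch (d a))⁻¹) hij]
  have hinv : (qvar ^ (2 * d i * d j))⁻¹ * qvar ^ (2 * d i * d j) = 1 := inv_mul_cancel₀ hq2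
  linear_combination (-((-qvar) ^ (∑ a : Fin m, ∑ b : Fin m, C a b * (d a : ℤ) * (d b : ℤ)) *
    (∏ a ∈ (Finset.univ.erase i).erase j, (qPoch (d a))⁻¹) *
    (qPoch (d i))⁻¹ * (qPoch (d j))⁻¹)) * hinv

end QuiverUnlink
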